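/- arXiv:0811.4202 — 5 statements merged into one kernel-verified Lean document; each statement's English description precedes it below -/
import Mathlib

section
/- Let a > 0 and b < 0 with a + 5b > 0. Then the tridiagonal-type operator E on sequences (r_j) defined rowwise with diagonal entries a + 2b (interior atomistic rows, off-diagonals b, b), a + (3/2)b (row K-1, off-diagonals b, b/2), a + 3b (row K, off-diagonals b/2, b/2), a + (9/2)b (row K+1, off-diagonal b/2, 0), and a + 4b (continuum rows, no off-diagonals) is strictly diagonally dominant in every row. -/
lemma sum_two_point_bound (s : Finset ℤ) (f : ℤ → ℝ) (hf : ∀ i, 0 ≤ f i)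
    (p q : ℤ) (h0 : ∀ i ∈ s, i ≠ p → i ≠ q → f i = 0) :
    ∑ i ∈ s, f i ≤ f p + f q := by
  classical
  have h1 : ∑ i ∈ s, f i = ∑ i ∈ s ∩ {p, q}, f i := by
    refine (Finset.sum_subset (Finset.inter_subset_left) ?_).symm
    intro i hi hni
    have : i ∉ ({p, q} : Finset ℤ) := fun h => hni (Finset.mem_inter.mpr ⟨hi, h⟩)
    simp only [Finset.mem_insert, Finset.mem_singleton, not_or] at this
    exact h0 i hi this.1 this.2
  have h2 : ∑ i ∈ s ∩ {p, q}, f i ≤ ∑ i ∈ ({p, q} : Finset ℤ), f i :=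
    Finset.sum_le_sum_of_subset_of_nonneg (Finset.inter_subset_right)
      (fun i _ _ => hf i)
  have h3 : ∑ i ∈ ({p, q} : Finset ℤ), f i ≤ f p + f q := by
    by_cases hpq : p = q
    · subst hpq
      have : ({p, p} : Finset ℤ) = {p} := by simp
      rw [this, Finset.sum_singleton]
      linarith [hf p]
    · rw [Finset.sum_pair hpq]
  linarith

/-- The factored quasicontinuum operator `E` (from `L^{qc} = Dᵀ E D`) is strictly
diagonally dominant in every row. -/
theorem stmt5 (a b : ℝ) (ha : 0 < a) (hb : b < 0) (hab : 0 < a + 5 * b)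
    (N K : ℤ) (hK : 2 ≤ K) (hKN : K ≤ N - 2)
    (E : ℤ → ℤ → ℝ)
    (hE1 : ∀ j i : ℤ, 0 ≤ j → j ≤ K - 2 →
      E j i = if i = j then a + 2 * b else if i = j - 1 ∨ i = j + 1 then b else 0)
    (hE2 : ∀ i : ℤ, E (K - 1) i =
      if i = K - 1 then a + (3 / 2) * b else if i = K - 2 then b else if i = K then b / 2 else 0)
    (hE3 : ∀ i : ℤ, E K i =
      if i = K then a + 3 * b else if i = K - 1 ∨ i = K + 1 then b / 2 else 0)
    (hE4 : ∀ i : ℤ, E (K + 1) i =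
      if i = K + 1 then a + (9 / 2) * b else if i = K then b / 2 else 0)
    (hE5 : ∀ j i : ℤ, K + 2 ≤ j → j ≤ N → E j i = if i = j then a + 4 * b else 0) :
    ∀ j : ℤ, 0 ≤ j → j ≤ N →
      |E j j| > ∑ i ∈ (Finset.Icc (-N) N).erase j, |E j i| := by
  intro j hj0 hjN
  have hbneg2 : |b| = -b := abs_of_neg hb
  have hb2 : |b / 2| = -(b / 2) := abs_of_neg (by linarith)
  by_cases h1 : j ≤ K - 2
  · -- interior atomistic row
    have hd : E j j = a + 2 * b := by rw [hE1 j j hj0 h1]; simp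
    have hp : E j (j - 1) = b := by
      rw [hE1 j (j - 1) hj0 h1]
      have : (j - 1 : ℤ) ≠ j := by omega
      simp [this]
    have hq : E j (j + 1) = b := by
      rw [hE1 j (j + 1) hj0 h1]
      have : (j + 1 : ℤ) ≠ j := by omega
      simp [this]
    have hsum : ∑ i ∈ (Finset.Icc (-N) N).erase j, |E j i|
        ≤ |E j (j - 1)| + |E j (j + 1)| := by
      apply sum_two_point_bound _ _ (fun i => abs_nonneg _)
      intro i hi hip hiq
      have hij : i ≠ j := Finset.ne_of_mem_erase hi
      rw [hE1 j i hj0 h1]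
      simp [hij, hip, hiq]
    rw [hp, hq, hbneg2] at hsum
    rw [hd, abs_of_pos (by linarith)]
    linarith
  by_cases h2 : j = K - 1
  · subst h2
    have hd : E (K - 1) (K - 1) = a + (3 / 2) * b := by rw [hE2]; simp
    have hp : E (K - 1) (K - 2) = b := by
      rw [hE2]
      have h : (K - 2 : ℤ) ≠ K - 1 := by omega
      simp [h]
    have hq : E (K - 1) K = b / 2 := by
      rw [hE2]
      have h : (K : ℤ) ≠ K - 1 := by omega
      have h' : (K : ℤ) ≠ K - 2 := by omega
      simp [h, h']
    have hsum : ∑ i ∈ (Finset.Icc (-N) N).erase (K - 1), |E (K - 1) i|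
        ≤ |E (K - 1) (K - 2)| + |E (K - 1) K| := by
      apply sum_two_point_bound _ _ (fun i => abs_nonneg _)
      intro i hi hip hiq
      have hij : i ≠ K - 1 := Finset.ne_of_mem_erase hi
      rw [hE2]
      simp [hij, hip, hiq]
    rw [hp, hq, hbneg2, hb2] at hsum
    rw [hd, abs_of_pos (by linarith)]
    linarith
  by_cases h3 : j = K
  · subst h3
    have hd : E j j = a + 3 * b := by rw [hE3]; simp
    have hp : E j (j - 1) = b / 2 := by
      rw [hE3]
      have h : (j - 1 : ℤ) ≠ j := by omega
      simp [h]
    have hq : E j (j + 1) = b / 2 := by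
      rw [hE3]
      have h : (j + 1 : ℤ) ≠ j := by omega
      have h' : (j + 1 : ℤ) ≠ j - 1 := by omega
      simp [h, h']
    have hsum : ∑ i ∈ (Finset.Icc (-N) N).erase j, |E j i|
        ≤ |E j (j - 1)| + |E j (j + 1)| := by
      apply sum_two_point_bound _ _ (fun i => abs_nonneg _)
      intro i hi hip hiq
      have hij : i ≠ j := Finset.ne_of_mem_erase hi
      rw [hE3]
      simp [hij, hip, hiq]
    rw [hp, hq, hb2] at hsum
    rw [hd, abs_of_pos (by linarith)]
    linarith
  by_cases h4 : j = K + 1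
  · subst h4
    have hd : E (K + 1) (K + 1) = a + (9 / 2) * b := by rw [hE4]; simp
    have hp : E (K + 1) K = b / 2 := by
      rw [hE4]
      have h : (K : ℤ) ≠ K + 1 := by omega
      simp [h]
    have hq : E (K + 1) (K + 2) = 0 := by
      rw [hE4]
      have h : (K + 2 : ℤ) ≠ K + 1 := by omega
      have h' : (K + 2 : ℤ) ≠ K := by omega
      simp [h, h']
    have hsum : ∑ i ∈ (Finset.Icc (-N) N).erase (K + 1), |E (K + 1) i|
        ≤ |E (K + 1) K| + |E (K + 1) (K + 2)| := by
      apply sum_two_point_bound _ _ (fun i => abs_nonneg _)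
      intro i hi hip hiq
      have hij : i ≠ K + 1 := Finset.ne_of_mem_erase hi
      rw [hE4]
      simp [hij, hip, hiq]
    rw [hp, hq, abs_zero, hb2] at hsum
    rw [hd, abs_of_pos (by linarith)]
    linarith
  · -- continuum rows
    have h5 : K + 2 ≤ j := by omega
    have hd : E j j = a + 4 * b := by rw [hE5 j j h5 hjN]; simp
    have hsum : ∑ i ∈ (Finset.Icc (-N) N).erase j, |E j i| = 0 := by
      apply Finset.sum_eq_zero
      intro i hi
      have hij : i ≠ j := Finset.ne_of_mem_erase hi
      rw [hE5 j i h5 hjN]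
      simp [hij]
    rw [hsum, hd, abs_of_pos (by linarith)]
    linarith
end

section
/- Let a > 0 and b < 0 with a + 5b > 0, let λ > 1, and for an integer K ≥ 2 set γ_j = (λ^j - λ^{-j})/λ^K. Define η_K = (a² + (15/2)ab + (53/4)b²)(2γ_{K+1} - γ_K - γ_{K-1}) + (1/2)b(a + (9/2)b)(γ_K - γ_{K-1}). Then η_K > 0. -/
/-- Positivity of the pivot `η_K` arising in the row reduction of the interface matrix. -/
theorem stmt8 (a b : ℝ) (ha : 0 < a) (hb : b < 0) (hab : 0 < a + 5 * b)
    (lam : ℝ) (hlam : 1 < lam) (K : ℤ) (hK : 2 ≤ K)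
    (γ : ℤ → ℝ) (hγ : ∀ j : ℤ, γ j = (lam ^ j - lam ^ (-j)) / lam ^ K) :
    0 < (a ^ 2 + (15 / 2) * a * b + (53 / 4) * b ^ 2)
          * (2 * γ (K + 1) - γ K - γ (K - 1))
        + (1 / 2) * b * (a + (9 / 2) * b) * (γ K - γ (K - 1)) := by
  have hl0 : (0 : ℝ) < lam := by linarith
  have mono : ∀ m n : ℤ, m < n → lam ^ m < lam ^ n := by
    intro m n h
    exact zpow_lt_zpow_right₀ hlam h
  have hpow : (0 : ℝ) < lam ^ K := zpow_pos hl0 K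
  -- γ is strictly increasing at the relevant points
  have hmono : ∀ m n : ℤ, m < n → γ m < γ n := by
    intro m n h
    rw [hγ m, hγ n]
    have h1 : lam ^ m < lam ^ n := mono m n h
    have h2 : lam ^ (-n) < lam ^ (-m) := mono (-n) (-m) (by omega)
    exact div_lt_div_of_pos_right (by linarith) hpow
  have hD1 : 0 < γ K - γ (K - 1) := sub_pos.mpr (hmono (K - 1) K (by omega))
  have hD2 : γ K < γ (K + 1) := hmono K (K + 1) (by omega)
  have hsum : 0 < (a ^ 2 + (15 / 2) * a * b + (53 / 4) * b ^ 2)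
      + (1 / 2) * b * (a + (9 / 2) * b) := by
    nlinarith [mul_pos hab (show (0:ℝ) < a + 3 * b by linarith), sq_nonneg b]
  have hc2 : (1 / 2) * b * (a + (9 / 2) * b) < 0 := by
    have : 0 < a + (9 / 2) * b := by linarith
    nlinarith
  nlinarith [mul_pos hsum (show 0 < 2 * γ (K + 1) - γ K - γ (K - 1) by linarith),
    mul_pos (neg_pos.mpr hc2)
      (show 0 < (2 * γ (K + 1) - γ K - γ (K - 1)) - (γ K - γ (K - 1)) by linarith)]
end

section
/- Let a > 0 and b < 0 with a + 5b > 0, λ > 1, K ≥ 2 an integer, γ_j = (λ^j - λ^{-j})/λ^K. Then the 3×3 matrix A_K with rows [ (1/2)b, -(1/2)b, bγ_{K+1} - (1/2)bγ_{K-1} ], [ -a - (5/2)b, 2a + (13/2)b, -aγ_K - 2bγ_K - (1/2)bγ_{K-1} ], [ -(1/2)b, -a - 4b, -(1/2)bγ_K ] is nonsingular. -/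
/-- The 3×3 interface matrix `A_K` of the linearized quasicontinuum equations is
nonsingular. -/
theorem stmt9 (a b : ℝ) (ha : 0 < a) (hb : b < 0) (hab : 0 < a + 5 * b)
    (lam : ℝ) (hlam : 1 < lam) (K : ℤ) (hK : 2 ≤ K)
    (γ : ℤ → ℝ) (hγ : ∀ j : ℤ, γ j = (lam ^ j - lam ^ (-j)) / lam ^ K) :
    Matrix.det
      !![(1 / 2) * b, -(1 / 2) * b, b * γ (K + 1) - (1 / 2) * b * γ (K - 1);
         -a - (5 / 2) * b, 2 * a + (13 / 2) * b,
           -a * γ K - 2 * b * γ K - (1 / 2) * b * γ (K - 1);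
         -(1 / 2) * b, -a - 4 * b, -(1 / 2) * b * γ K] ≠ 0 := by
  have hlam0 : (0:ℝ) < lam := lt_trans one_pos hlam
  have hpK : (0:ℝ) < lam ^ K := zpow_pos hlam0 K
  -- monotonicity of γ
  have hmono : ∀ i j : ℤ, i < j → γ i < γ j := by
    intro i j hij
    rw [hγ i, hγ j]
    apply div_lt_div_of_pos_right _ hpK
    have h1 : lam ^ i < lam ^ j := zpow_lt_zpow_right₀ hlam hij
    have h2 : lam ^ (-j) < lam ^ (-i) := zpow_lt_zpow_right₀ hlam (by omega)
    linarith
  set g1 := γ (K + 1) with hg1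
  set g0 := γ K with hg0
  set gm := γ (K - 1) with hgm
  have h10 : g0 < g1 := hmono K (K + 1) (by omega)
  have h0m : gm < g0 := hmono (K - 1) K (by omega)
  -- determinant identity
  have hdet : Matrix.det
      !![(1 / 2) * b, -(1 / 2) * b, b * g1 - (1 / 2) * b * gm;
         -a - (5 / 2) * b, 2 * a + (13 / 2) * b,
           -a * g0 - 2 * b * g0 - (1 / 2) * b * gm;
         -(1 / 2) * b, -a - 4 * b, -(1 / 2) * b * g0]
      = (b / 2) * ((a ^ 2 + (15 / 2) * a * b + (53 / 4) * b ^ 2) *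
          (2 * g1 - g0 - gm) + (b / 2) * (a + (9 / 2) * b) * (g0 - gm)) := by
    simp [Matrix.det_fin_three, Matrix.cons_val_zero, Matrix.cons_val_one]
    ring
  rw [hdet]
  have hP : 0 < a ^ 2 + (15 / 2) * a * b + (53 / 4) * b ^ 2 := by
    nlinarith [mul_pos hab (neg_pos.mpr hb), sq_nonneg (a + 5 * b), sq_nonneg b]
  have hPc : 0 < a ^ 2 + (15 / 2) * a * b + (53 / 4) * b ^ 2 +
      (b / 2) * (a + (9 / 2) * b) := by
    nlinarith [mul_pos hab (neg_pos.mpr hb), sq_nonneg (a + 5 * b), sq_nonneg b]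
  have hE : 0 < (a ^ 2 + (15 / 2) * a * b + (53 / 4) * b ^ 2) *
      (2 * g1 - g0 - gm) + (b / 2) * (a + (9 / 2) * b) * (g0 - gm) := by
    nlinarith [mul_pos hP (sub_pos.mpr h10), mul_pos hPc (sub_pos.mpr h0m)]
  have : (b / 2) * ((a ^ 2 + (15 / 2) * a * b + (53 / 4) * b ^ 2) *
      (2 * g1 - g0 - gm) + (b / 2) * (a + (9 / 2) * b) * (g0 - gm)) < 0 :=
    mul_neg_of_neg_of_pos (by linarith) hE
  linarith
end

section
/- Let a > 0 and b < 0 with a + 5b > 0 and let λ = ((a+2b) + √(a²+4ab))/(-2b). Define A_K (for integer K ≥ 2) as the 3×3 matrix with entries given in terms of γ_j = (λ^j - λ^{-j})/λ^K by rows [ (1/2)b, -(1/2)b, bγ_{K+1} - (1/2)bγ_{K-1} ], [ -a-(5/2)b, 2a+(13/2)b, -aγ_K - 2bγ_K - (1/2)bγ_{K-1} ], [ -(1/2)b, -a-4b, -(1/2)bγ_K ]. Then there exists C > 0, independent of K, such that ‖A_K^{-1}‖ ≤ C for all K ≥ 2. -/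
attribute [local instance] Matrix.normedAddCommGroup

private lemma aux_cof (E x y z w : ℝ) (hx : |x| ≤ E) (hy : |y| ≤ E)
    (hz : |z| ≤ E) (hw : |w| ≤ E) : |x * y - z * w| ≤ 2 * E ^ 2 := by
  have hE : 0 ≤ E := (abs_nonneg x).trans hx
  have h1 : |x * y| ≤ E ^ 2 := by
    rw [abs_mul, sq]
    exact mul_le_mul hx hy (abs_nonneg y) hE
  have h2 : |z * w| ≤ E ^ 2 := by
    rw [abs_mul, sq]
    exact mul_le_mul hz hw (abs_nonneg w) hE
  calc |x * y - z * w| ≤ |x * y| + |z * w| := abs_sub _ _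
    _ ≤ 2 * E ^ 2 := by linarith

private lemma aux_cof' (E x y z w : ℝ) (hx : |x| ≤ E) (hy : |y| ≤ E)
    (hz : |z| ≤ E) (hw : |w| ≤ E) : |-(x * y) + z * w| ≤ 2 * E ^ 2 := by
  have : -(x * y) + z * w = z * w - x * y := by ring
  rw [this]
  exact aux_cof E z w x y hz hw hx hy

set_option maxHeartbeats 1000000 in
private lemma main_bound (a b lam u : ℝ) (ha : 0 < a) (hb : b < 0)
    (hab : 0 < a + 5 * b) (hlam1 : 1 < lam) (hu0 : 0 < u) (hu1 : u ≤ 1)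
    (M : Matrix (Fin 3) (Fin 3) ℝ)
    (hM : M = !![(1 / 2) * b, -(1 / 2) * b,
          b * (lam - u * lam⁻¹) - (1 / 2) * b * (lam⁻¹ - u * lam);
        -a - (5 / 2) * b, 2 * a + (13 / 2) * b,
          -a * (1 - u) - 2 * b * (1 - u) - (1 / 2) * b * (lam⁻¹ - u * lam);
        -(1 / 2) * b, -a - 4 * b, -(1 / 2) * b * (1 - u)]) :
    ‖M⁻¹‖ ≤ 2 * ((3 * a - 13 * b) * (lam + 1)) ^ 2 /
      ((-b) * (((1/2) * a ^ 2 + 4 * a * b + (31/4) * b ^ 2) * (lam - lam⁻¹)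
        + ((1/2) * a ^ 2 + (7/2) * a * b + (11/2) * b ^ 2) * (lam - 1))) := by
  have hb' : 0 < -b := by linarith
  have hlam0 : 0 < lam := by linarith
  have hne : lam ≠ 0 := ne_of_gt hlam0
  have hmu0 : 0 < lam⁻¹ := inv_pos.mpr hlam0
  have hmu1 : lam⁻¹ < 1 := by rw [inv_lt_one_iff₀]; right; exact hlam1
  have hmul : lam * lam⁻¹ = 1 := mul_inv_cancel₀ hne
  have p1 : 0 ≤ u * lam⁻¹ := by positivity
  have p2 : u * lam⁻¹ ≤ 1 := by nlinarith only [hu0, hu1, hmu0, hmu1]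
  have p3 : 0 ≤ u * lam := by positivity
  have p4 : u * lam ≤ lam := by nlinarith only [hu0, hu1, hlam0, hlam1]
  have be00 : |(1 / 2 : ℝ) * b| ≤ (3 * a - 13 * b) * (lam + 1) := by
    rw [abs_le]; constructor <;> nlinarith only [ha, hb, hab, hb', hlam0, hlam1, hmu0, hmu1, hu0, hu1, p1, p2, p3, p4, mul_pos ha hlam0, mul_pos hb' hlam0]
  have be01 : |-(1 / 2 : ℝ) * b| ≤ (3 * a - 13 * b) * (lam + 1) := by
    rw [abs_le]; constructor <;> nlinarith only [ha, hb, hab, hb', hlam0, hlam1, hmu0, hmu1, hu0, hu1, p1, p2, p3, p4, mul_pos ha hlam0, mul_pos hb' hlam0]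
  have be02 : |b * (lam - u * lam⁻¹) - (1 / 2) * b * (lam⁻¹ - u * lam)| ≤
      (3 * a - 13 * b) * (lam + 1) := by
    rw [abs_le]
    constructor <;>
      nlinarith only [ha, hb, hab, hb', hlam0, hlam1, hmu0, hmu1, hu0, hu1, p1, p2, p3, p4, mul_pos ha hlam0, mul_pos hb' hlam0,
        mul_nonneg hb'.le p1, mul_nonneg hb'.le p3,
        mul_nonneg hb'.le (by linarith : (0:ℝ) ≤ 1 - u * lam⁻¹),
        mul_nonneg hb'.le (by linarith : (0:ℝ) ≤ lam - u * lam),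
        mul_nonneg hb'.le hmu0.le, mul_nonneg hb'.le (by linarith : (0:ℝ) ≤ 1 - lam⁻¹)]
  have be10 : |-a - (5 / 2) * b| ≤ (3 * a - 13 * b) * (lam + 1) := by
    rw [abs_le]; constructor <;> nlinarith only [ha, hb, hab, hb', hlam0, hlam1, hmu0, hmu1, hu0, hu1, p1, p2, p3, p4, mul_pos ha hlam0, mul_pos hb' hlam0]
  have be11 : |2 * a + (13 / 2) * b| ≤ (3 * a - 13 * b) * (lam + 1) := by
    rw [abs_le]; constructor <;> nlinarith only [ha, hb, hab, hb', hlam0, hlam1, hmu0, hmu1, hu0, hu1, p1, p2, p3, p4, mul_pos ha hlam0, mul_pos hb' hlam0]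
  have be12 : |-a * (1 - u) - 2 * b * (1 - u) - (1 / 2) * b * (lam⁻¹ - u * lam)| ≤
      (3 * a - 13 * b) * (lam + 1) := by
    rw [abs_le]
    constructor <;>
      nlinarith only [ha, hb, hab, hb', hlam0, hlam1, hmu0, hmu1, hu0, hu1, p1, p2, p3, p4, mul_pos ha hlam0, mul_pos hb' hlam0,
        mul_nonneg hb'.le p1, mul_nonneg hb'.le p3,
        mul_nonneg ha.le hu0.le, mul_nonneg ha.le (by linarith : (0:ℝ) ≤ 1 - u),
        mul_nonneg hb'.le hu0.le, mul_nonneg hb'.le (by linarith : (0:ℝ) ≤ 1 - u),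
        mul_nonneg hb'.le (by linarith : (0:ℝ) ≤ lam - u * lam),
        mul_nonneg hb'.le hmu0.le, mul_nonneg ha.le (by linarith : (0:ℝ) ≤ lam - 1),
        mul_nonneg hb'.le (by linarith : (0:ℝ) ≤ lam - 1)]
  have be20 : |-(1 / 2 : ℝ) * b| ≤ (3 * a - 13 * b) * (lam + 1) := be01
  have be21 : |-a - 4 * b| ≤ (3 * a - 13 * b) * (lam + 1) := by
    rw [abs_le]; constructor <;> nlinarith only [ha, hb, hab, hb', hlam0, hlam1, hmu0, hmu1, hu0, hu1, p1, p2, p3, p4, mul_pos ha hlam0, mul_pos hb' hlam0]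
  have be22 : |-(1 / 2) * b * (1 - u)| ≤ (3 * a - 13 * b) * (lam + 1) := by
    rw [abs_le]
    constructor <;>
      nlinarith only [ha, hb, hab, hb', hlam0, hlam1, hmu0, hmu1, hu0, hu1, p1, p2, p3, p4, mul_pos ha hlam0, mul_pos hb' hlam0,
        mul_nonneg hb'.le hu0.le, mul_nonneg hb'.le (by linarith : (0:ℝ) ≤ 1 - u)]
  -- determinant
  have hQ : 0 < (1/2) * a ^ 2 + 4 * a * b + (31/4) * b ^ 2 := by
    nlinarith only [ha, hb, hab, hb', sq_nonneg (a + 5*b), sq_nonneg b, mul_pos hab hb']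
  have hR : 0 < (1/2) * a ^ 2 + (7/2) * a * b + (11/2) * b ^ 2 := by
    nlinarith only [ha, hb, hab, hb', sq_nonneg (a + 5*b), sq_nonneg b, mul_pos hab hb']
  have hδ : 0 < (-b) * (((1/2) * a ^ 2 + 4 * a * b + (31/4) * b ^ 2) * (lam - lam⁻¹)
      + ((1/2) * a ^ 2 + (7/2) * a * b + (11/2) * b ^ 2) * (lam - 1)) := by
    have h1 : 0 < lam - lam⁻¹ := by linarith
    have h2 : 0 < lam - 1 := by linarith
    positivity
  have hE : 0 < (3 * a - 13 * b) * (lam + 1) :=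
    mul_pos (by linarith) (by linarith)
  have hE2 : 0 < 2 * ((3 * a - 13 * b) * (lam + 1)) ^ 2 := by positivity
  have hdet : M.det = b * (((1/2) * a ^ 2 + 4 * a * b + (31/4) * b ^ 2) * (lam - lam⁻¹) * (1 + u)
      + ((1/2) * a ^ 2 + (7/2) * a * b + (11/2) * b ^ 2) * ((lam - 1) + u * (1 - lam⁻¹))) := by
    rw [hM, Matrix.det_fin_three]
    simp only [Matrix.cons_val_zero, Matrix.cons_val_one, Matrix.head_cons,
      Matrix.cons_val_two, Matrix.tail_cons, Matrix.cons_val_fin_one, Matrix.head_fin_const,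
      Matrix.cons_val', Matrix.empty_val', Matrix.of_apply]
    field_simp
    ring
  have hD : 0 < ((1/2) * a ^ 2 + 4 * a * b + (31/4) * b ^ 2) * (lam - lam⁻¹) * (1 + u)
      + ((1/2) * a ^ 2 + (7/2) * a * b + (11/2) * b ^ 2) * ((lam - 1) + u * (1 - lam⁻¹)) := by
    have h1 : 0 < lam - lam⁻¹ := by linarith
    have h2 : 0 < (lam - 1) + u * (1 - lam⁻¹) := by
      nlinarith only [hlam1, hmu1, hu0, mul_nonneg hu0.le (by linarith only [hmu1] : (0:ℝ) ≤ 1 - lam⁻¹)]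
    have h3 : 0 < 1 + u := by linarith
    positivity
  have hdetabs : (-b) * (((1/2) * a ^ 2 + 4 * a * b + (31/4) * b ^ 2) * (lam - lam⁻¹)
      + ((1/2) * a ^ 2 + (7/2) * a * b + (11/2) * b ^ 2) * (lam - 1)) ≤ |M.det| := by
    rw [hdet, abs_mul, abs_of_neg hb, abs_of_pos hD]
    have h1 : 0 < lam - lam⁻¹ := by linarith
    have h3 : 0 ≤ 1 - lam⁻¹ := by linarith
    have t1 : 0 ≤ (-b) * (((1/2) * a ^ 2 + 4 * a * b + (31/4) * b ^ 2) * (lam - lam⁻¹) * u) :=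
      mul_nonneg hb'.le (mul_nonneg (mul_nonneg hQ.le h1.le) hu0.le)
    have t2 : 0 ≤ (-b) * (((1/2) * a ^ 2 + (7/2) * a * b + (11/2) * b ^ 2) * (u * (1 - lam⁻¹))) :=
      mul_nonneg hb'.le (mul_nonneg hR.le (mul_nonneg hu0.le h3))
    linarith [t1, t2]
  have hadj : ∀ i j, |M.adjugate i j| ≤ 2 * ((3 * a - 13 * b) * (lam + 1)) ^ 2 := by
    rw [hM]
    intro i j
    rw [Matrix.adjugate_fin_three_of]
    fin_cases i <;> fin_cases j <;>
      simp only [Matrix.cons_val_zero, Matrix.cons_val_one, Matrix.head_cons,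
        Matrix.cons_val_two, Matrix.tail_cons, Matrix.cons_val_fin_one, Matrix.head_fin_const,
        Matrix.cons_val', Matrix.empty_val', Matrix.of_apply, Fin.mk_zero, Fin.mk_one,
        Fin.isValue, Fin.zero_eta]
    · exact aux_cof _ _ _ _ _ be11 be22 be12 be21
    · exact aux_cof' _ _ _ _ _ be01 be22 be02 be21
    · exact aux_cof _ _ _ _ _ be01 be12 be02 be11
    · exact aux_cof' _ _ _ _ _ be10 be22 be12 be20
    · exact aux_cof _ _ _ _ _ be00 be22 be02 be20
    · exact aux_cof' _ _ _ _ _ be00 be12 be02 be10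
    · exact aux_cof _ _ _ _ _ be10 be21 be11 be20
    · exact aux_cof' _ _ _ _ _ be00 be21 be01 be20
    · exact aux_cof _ _ _ _ _ be00 be11 be01 be10
  rw [Matrix.inv_def, Matrix.norm_le_iff (div_pos hE2 hδ).le]
  intro i j
  rw [Matrix.smul_apply, smul_eq_mul, Real.norm_eq_abs, abs_mul, Ring.inverse_eq_inv, abs_inv]
  have hinv : |M.det|⁻¹ ≤ ((-b) * (((1/2) * a ^ 2 + 4 * a * b + (31/4) * b ^ 2) * (lam - lam⁻¹)
      + ((1/2) * a ^ 2 + (7/2) * a * b + (11/2) * b ^ 2) * (lam - 1)))⁻¹ :=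
    inv_anti₀ hδ hdetabs
  calc |M.det|⁻¹ * |M.adjugate i j| ≤
      ((-b) * (((1/2) * a ^ 2 + 4 * a * b + (31/4) * b ^ 2) * (lam - lam⁻¹)
        + ((1/2) * a ^ 2 + (7/2) * a * b + (11/2) * b ^ 2) * (lam - 1)))⁻¹ *
        (2 * ((3 * a - 13 * b) * (lam + 1)) ^ 2) :=
        mul_le_mul hinv (hadj i j) (abs_nonneg _) (inv_nonneg.mpr hδ.le)
    _ = 2 * ((3 * a - 13 * b) * (lam + 1)) ^ 2 /
      ((-b) * (((1/2) * a ^ 2 + 4 * a * b + (31/4) * b ^ 2) * (lam - lam⁻¹)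
        + ((1/2) * a ^ 2 + (7/2) * a * b + (11/2) * b ^ 2) * (lam - 1))) := by
        rw [div_eq_mul_inv]; ring

/-- The inverses of the interface matrices `A_K` are bounded uniformly in `K`. -/
theorem stmt10 (a b : ℝ) (ha : 0 < a) (hb : b < 0) (hab : 0 < a + 5 * b)
    (lam : ℝ) (hlam : lam = ((a + 2 * b) + Real.sqrt (a ^ 2 + 4 * a * b)) / (-2 * b))
    (γ : ℤ → ℤ → ℝ)
    (hγ : ∀ K j : ℤ, γ K j = (lam ^ j - lam ^ (-j)) / lam ^ K)
    (A : ℤ → Matrix (Fin 3) (Fin 3) ℝ)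
    (hA : ∀ K : ℤ, A K =
      !![(1 / 2) * b, -(1 / 2) * b, b * γ K (K + 1) - (1 / 2) * b * γ K (K - 1);
         -a - (5 / 2) * b, 2 * a + (13 / 2) * b,
           -a * γ K K - 2 * b * γ K K - (1 / 2) * b * γ K (K - 1);
         -(1 / 2) * b, -a - 4 * b, -(1 / 2) * b * γ K K]) :
    ∃ C : ℝ, 0 < C ∧ ∀ K : ℤ, 2 ≤ K → ‖(A K)⁻¹‖ ≤ C := by
  have hb' : 0 < -b := by linarith
  have ha4 : 0 < a + 4 * b := by linarith
  have harg : 0 ≤ a ^ 2 + 4 * a * b := by nlinarith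
  have hs0 : 0 ≤ Real.sqrt (a ^ 2 + 4 * a * b) := Real.sqrt_nonneg _
  have hlam1 : 1 < lam := by
    rw [hlam, lt_div_iff₀ (by linarith : (0:ℝ) < -2 * b)]
    linarith
  have hlam0 : 0 < lam := by linarith
  have hne : lam ≠ 0 := ne_of_gt hlam0
  refine ⟨2 * ((3 * a - 13 * b) * (lam + 1)) ^ 2 /
      ((-b) * (((1/2) * a ^ 2 + 4 * a * b + (31/4) * b ^ 2) * (lam - lam⁻¹)
        + ((1/2) * a ^ 2 + (7/2) * a * b + (11/2) * b ^ 2) * (lam - 1))), ?_, ?_⟩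
  · have hmu1 : lam⁻¹ < 1 := by rw [inv_lt_one_iff₀]; right; exact hlam1
    have hmu0 : 0 < lam⁻¹ := inv_pos.mpr hlam0
    have hQ : 0 < (1/2) * a ^ 2 + 4 * a * b + (31/4) * b ^ 2 := by
      nlinarith only [ha, hb, hab, hb', sq_nonneg (a + 5*b), sq_nonneg b, mul_pos hab hb']
    have hR : 0 < (1/2) * a ^ 2 + (7/2) * a * b + (11/2) * b ^ 2 := by
      nlinarith only [ha, hb, hab, hb', sq_nonneg (a + 5*b), sq_nonneg b, mul_pos hab hb']
    have h1 : 0 < lam - lam⁻¹ := by linarith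
    have h2 : 0 < lam - 1 := by linarith
    have h3 : 0 < (3 * a - 13 * b) * (lam + 1) := mul_pos (by linarith) (by linarith)
    positivity
  · intro K hK
    have hu0 : 0 < lam ^ (-(2 * K)) := zpow_pos hlam0 _
    have hu1 : lam ^ (-(2 * K)) ≤ 1 := by
      have : lam ^ (-(2 * K)) ≤ lam ^ (0 : ℤ) :=
        zpow_le_zpow_right₀ (le_of_lt hlam1) (by omega)
      simpa only [zpow_zero] using this
    have hg1 : γ K (K + 1) = lam - lam ^ (-(2 * K)) * lam⁻¹ := by
      rw [hγ, div_eq_iff (zpow_ne_zero _ hne), zpow_add_one₀ hne,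
        show (-(K + 1) : ℤ) = -(2 * K) + (-1) + K by ring,
        zpow_add₀ hne, zpow_add₀ hne, zpow_neg_one]
      ring
    have hg0 : γ K K = 1 - lam ^ (-(2 * K)) := by
      rw [hγ, div_eq_iff (zpow_ne_zero _ hne),
        show (-K : ℤ) = -(2 * K) + K by ring, zpow_add₀ hne]
      ring
    have hgm : γ K (K - 1) = lam⁻¹ - lam ^ (-(2 * K)) * lam := by
      rw [hγ, div_eq_iff (zpow_ne_zero _ hne), zpow_sub_one₀ hne,
        show (-(K - 1) : ℤ) = -(2 * K) + 1 + K by ring,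
        zpow_add₀ hne, zpow_add₀ hne, zpow_one]
      ring
    exact main_bound a b lam (lam ^ (-(2 * K))) ha hb hab hlam1 hu0 hu1 (A K)
      (by rw [hA K, hg1, hg0, hgm])
end

section
/- Let N be a positive integer, h = 1/N, 2 ≤ K ≤ N−2, λ > 1, 1 ≤ p < ∞, and suppose |m| ≤ Ch, |β| ≤ Ch, |ũ| ≤ Ch. Define the discrete derivative sequence u'_j for 0 ≤ j ≤ N−1 by: u'_j = m + (β/h)((λ^{j+1} − λ^{−j−1}) − (λ^j − λ^{−j}))/λ^K for 0 ≤ j ≤ K−1; u'_K = m − m/h + ũ/h − (β/h)(λ^K − λ^{−K})/λ^K; u'_{K+1} = m − ũ/h; u'_j = m for K+2 ≤ j ≤ N−1; extended by u'_{−j−1} = u'_j. Then (∑_{j=−N}^{N−1} h |u'_j|^p)^{1/p} ≤ C' h^{1/p} for a constant C' depending only on C, λ, p-uniformly (i.e., C' can be chosen independent of p, h, K, N). -/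
set_option maxHeartbeats 1000000

open Finset

/-- Superadditivity of rpow on nonneg reals. -/
lemma qc_superadd {p : ℝ} (hp : 1 ≤ p) {x y : ℝ} (hx : 0 ≤ x) (hy : 0 ≤ y) :
    x ^ p + y ^ p ≤ (x + y) ^ p := by
  have h := NNReal.add_rpow_le_rpow_add (⟨x, hx⟩ : NNReal) ⟨y, hy⟩ hp
  have := (NNReal.coe_le_coe).2 h
  push_cast [NNReal.coe_rpow] at this
  exact this

/-- Splitting: (x+y)^p ≤ 2^p (x^p + y^p). -/
lemma qc_split {p : ℝ} (hp : 0 ≤ p) {x y : ℝ} (hx : 0 ≤ x) (hy : 0 ≤ y) :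
    (x + y) ^ p ≤ 2 ^ p * (x ^ p + y ^ p) := by
  have hm : x + y ≤ 2 * max x y := by
    rcases le_total x y with h | h
    · simp [max_eq_right h]; linarith
    · simp [max_eq_left h]; linarith
  have h0 : (0:ℝ) ≤ max x y := le_max_of_le_left hx
  calc (x + y) ^ p ≤ (2 * max x y) ^ p :=
        Real.rpow_le_rpow (by linarith) hm hp
    _ = 2 ^ p * (max x y) ^ p := Real.mul_rpow (by norm_num) h0
    _ ≤ 2 ^ p * (x ^ p + y ^ p) := by
        gcongr
        rcases le_total x y with h | h
        · rw [max_eq_right h]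
          have : (0:ℝ) ≤ x ^ p := Real.rpow_nonneg hx p
          linarith
        · rw [max_eq_left h]
          have : (0:ℝ) ≤ y ^ p := Real.rpow_nonneg hy p
          linarith

/-- Geometric sum bound. -/
lemma qc_geom {r : ℝ} (h0 : 0 ≤ r) (h1 : r < 1) (n : ℕ) :
    ∑ i ∈ Finset.range n, r ^ i ≤ (1 - r)⁻¹ := by
  have hne : r ≠ 1 := ne_of_lt h1
  rw [geom_sum_eq hne]
  have hrn : 0 ≤ r ^ n := pow_nonneg h0 n
  have h2 : (r ^ n - 1) / (r - 1) = (1 - r ^ n) / (1 - r) := by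
    rw [div_eq_div_iff (by linarith) (by linarith)]; ring
  rw [h2, div_le_iff₀ (by linarith)]
  have h3 : (1 - r)⁻¹ * (1 - r) = 1 := inv_mul_cancel₀ (by linarith)
  nlinarith

lemma qc_pow_rpow {x : ℝ} (hx : 0 ≤ x) (n : ℕ) (p : ℝ) : (x ^ n) ^ p = (x ^ p) ^ n := by
  rw [← Real.rpow_natCast x n, ← Real.rpow_natCast (x ^ p) n,
    ← Real.rpow_mul hx, ← Real.rpow_mul hx, mul_comm]

/-- `w^{1,p}` seminorm bound: the discrete derivative of the quasicontinuum error
satisfies `(∑ h |u'_j|^p)^{1/p} ≤ C' h^{1/p}` with `C'` independent of `p, h, K, N`. -/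
theorem stmt14 (C lam : ℝ) (hlam : 1 < lam) :
    ∃ C' : ℝ, 0 < C' ∧
      ∀ (p : ℝ), 1 ≤ p →
      ∀ (N K : ℤ) (h m β ut : ℝ) (u' : ℤ → ℝ),
        0 < N → 2 ≤ K → K ≤ N - 2 → h = 1 / (N : ℝ) →
        |m| ≤ C * h → |β| ≤ C * h → |ut| ≤ C * h →
        (∀ j : ℤ, 0 ≤ j → j ≤ K - 1 →
          u' j = m + β / h *
            ((lam ^ (j + 1) - lam ^ (-(j + 1))) - (lam ^ j - lam ^ (-j))) / lam ^ K) →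
        u' K = m - m / h + ut / h - β / h * (lam ^ K - lam ^ (-K)) / lam ^ K →
        u' (K + 1) = m - ut / h →
        (∀ j : ℤ, K + 2 ≤ j → j ≤ N - 1 → u' j = m) →
        (∀ j : ℤ, u' (-j - 1) = u' j) →
        (∑ j ∈ Finset.Icc (-N) (N - 1), h * |u' j| ^ p) ^ (1 / p) ≤ C' * h ^ (1 / p) := by
  have hlam0 : (0:ℝ) < lam := by linarith
  obtain ⟨D, hD_def⟩ : ∃ D : ℝ, D = 4 * |C| * lam + 3 * |C| + 1 := ⟨_, rfl⟩
  obtain ⟨E, hE_def⟩ : ∃ E : ℝ, E = 2 + lam + (lam - 1)⁻¹ := ⟨_, rfl⟩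
  have hCabs : (0:ℝ) ≤ |C| := abs_nonneg C
  have hD1 : 1 ≤ D := by rw [hD_def]; nlinarith
  have hD0 : 0 < D := by linarith
  have hinv0 : (0:ℝ) ≤ (lam - 1)⁻¹ := inv_nonneg.2 (by linarith)
  have hE2 : 2 ≤ E := by rw [hE_def]; linarith
  have hE0 : 0 < E := by linarith
  refine ⟨2 * (2 * D * E + D), by nlinarith, ?_⟩
  intro p hp N K h m β ut u' hN hK2 hKN hh hm hβ hut hA hKeq hK1eq hB hsym
  have hp0 : (0:ℝ) < p := lt_of_lt_of_le one_pos hp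
  have hNR : (0:ℝ) < (N:ℝ) := by exact_mod_cast hN
  have h0 : 0 < h := by rw [hh]; positivity
  have h1 : h ≤ 1 := by
    rw [hh, div_le_one hNR]
    exact_mod_cast hN
  have hC0 : 0 ≤ C := by nlinarith [abs_nonneg m]
  have hCC : |C| = C := abs_of_nonneg hC0
  have hNh : (N:ℝ) * h = 1 := by rw [hh]; field_simp
  -- nonnegativity of the summand
  have hf0 : ∀ j : ℤ, 0 ≤ h * |u' j| ^ p := fun j => by positivity
  -- symmetry: the full sum is twice the sum over [0, N-1]
  have hsplit1 : Finset.Icc (-N) (N-1) = Finset.Icc (-N) (-1) ∪ Finset.Icc 0 (N-1) := by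
    ext j; simp only [Finset.mem_Icc, Finset.mem_union]; omega
  have hdisj1 : Disjoint (Finset.Icc (-N) (-1)) (Finset.Icc (0:ℤ) (N-1)) := by
    simp only [Finset.disjoint_left, Finset.mem_Icc]; omega
  have hneg : ∑ j ∈ Finset.Icc (-N) (-1), h * |u' j| ^ p
      = ∑ j ∈ Finset.Icc (0:ℤ) (N-1), h * |u' j| ^ p := by
    refine Finset.sum_nbij' (fun j => -j - 1) (fun j => -j - 1) ?_ ?_ ?_ ?_ ?_
    · intro a ha; simp only [Finset.mem_Icc] at *; omega
    · intro a ha; simp only [Finset.mem_Icc] at *; omega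
    · intro a _; omega
    · intro a _; omega
    · intro a _; rw [hsym a]
  have hsum2 : ∑ j ∈ Finset.Icc (-N) (N-1), h * |u' j| ^ p
      = 2 * ∑ j ∈ Finset.Icc (0:ℤ) (N-1), h * |u' j| ^ p := by
    rw [hsplit1, Finset.sum_union hdisj1, hneg]; ring
  -- split the positive part
  have hsplit2 : Finset.Icc (0:ℤ) (N-1) = Finset.Icc 0 (K+1) ∪ Finset.Icc (K+2) (N-1) := by
    ext j; simp only [Finset.mem_Icc, Finset.mem_union]; omega
  have hdisj2 : Disjoint (Finset.Icc (0:ℤ) (K+1)) (Finset.Icc (K+2) (N-1)) := by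
    simp only [Finset.disjoint_left, Finset.mem_Icc]; omega
  -- pointwise bounds
  have hlK : (0:ℝ) < lam ^ K := zpow_pos hlam0 K
  have hβh : |β| / h ≤ C := by rw [div_le_iff₀ h0]; exact hβ
  have hmh : |m| / h ≤ C := by rw [div_le_iff₀ h0]; exact hm
  have huth : |ut| / h ≤ C := by rw [div_le_iff₀ h0]; exact hut
  have hCD : C ≤ D := by rw [hD_def, hCC]; nlinarith
  have h3CD : 3 * C ≤ D := by rw [hD_def, hCC]; nlinarith
  have h4CD : 4 * C * lam ≤ D := by rw [hD_def, hCC]; nlinarith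
  have keyA : ∀ j ∈ Finset.Icc (0:ℤ) (K+1), |u' j| ≤ D * (h + lam ^ (j - K)) := by
    intro j hj
    rw [Finset.mem_Icc] at hj
    obtain ⟨hj0, hjK1⟩ := hj
    have ht0 : (0:ℝ) ≤ lam ^ (j - K) := (zpow_pos hlam0 _).le
    by_cases hcase : j ≤ K - 1
    · -- atomistic region
      rw [hA j hj0 hcase]
      have hb1 : lam ^ j ≤ lam ^ (j+1) := zpow_le_zpow_right₀ hlam.le (by omega)
      have hb2 : lam ^ (-(j+1)) ≤ 1 := zpow_le_one_of_nonpos₀ hlam.le (by omega)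
      have hb3 : lam ^ (-j) ≤ 1 := zpow_le_one_of_nonpos₀ hlam.le (by omega)
      have hb4 : (1:ℝ) ≤ lam ^ (j+1) := one_le_zpow₀ hlam.le (by omega)
      have hb5 : (0:ℝ) < lam ^ (-(j+1)) := zpow_pos hlam0 _
      have hb6 : (0:ℝ) < lam ^ (-j) := zpow_pos hlam0 _
      have hb7 : (0:ℝ) < lam ^ j := zpow_pos hlam0 _
      have hDle : |lam ^ (j+1) - lam ^ (-(j+1)) - (lam ^ j - lam ^ (-j))| ≤ 4 * lam ^ (j+1) := by
        rw [abs_le]; constructor <;> linarith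
      have hfact : lam ^ (j+1) = lam ^ (j - K) * lam ^ K * lam := by
        rw [← zpow_add₀ (ne_of_gt hlam0), show j - K + K = j from by ring,
          ← zpow_add_one₀ (ne_of_gt hlam0)]
      calc |m + β / h * (lam ^ (j+1) - lam ^ (-(j+1)) - (lam ^ j - lam ^ (-j))) / lam ^ K|
          ≤ |m| + |β / h * (lam ^ (j+1) - lam ^ (-(j+1)) - (lam ^ j - lam ^ (-j))) / lam ^ K| :=
            abs_add_le _ _
        _ = |m| + |β| / h * |lam ^ (j+1) - lam ^ (-(j+1)) - (lam ^ j - lam ^ (-j))| / lam ^ K := by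
            rw [abs_div, abs_mul, abs_div, abs_of_pos h0, abs_of_pos hlK]
        _ ≤ C * h + C * (4 * lam ^ (j+1)) / lam ^ K := by
            gcongr
        _ = C * h + 4 * C * lam * lam ^ (j - K) := by
            rw [hfact]; field_simp
        _ ≤ D * h + D * lam ^ (j - K) := by
            have e1 : C * h ≤ D * h := mul_le_mul_of_nonneg_right hCD h0.le
            have e2 : 4 * C * lam * lam ^ (j - K) ≤ D * lam ^ (j - K) :=
              mul_le_mul_of_nonneg_right h4CD ht0
            linarith
        _ = D * (h + lam ^ (j - K)) := by ring
    · -- interface points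
      have hX : |lam ^ K - lam ^ (-K)| ≤ lam ^ K := by
        have hx1 : (0:ℝ) < lam ^ (-K) := zpow_pos hlam0 _
        have hx2 : lam ^ (-K) ≤ 1 := zpow_le_one_of_nonpos₀ hlam.le (by omega)
        have hx3 : (1:ℝ) ≤ lam ^ K := one_le_zpow₀ hlam.le (by omega)
        rw [abs_le]; constructor <;> linarith
      rcases (show j = K ∨ j = K + 1 from by omega) with hjeq | hjeq
      · subst hjeq
        rw [hKeq, sub_self, zpow_zero]
        have t2 : |m / h| ≤ C := by rw [abs_div, abs_of_pos h0]; exact hmh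
        have t3 : |ut / h| ≤ C := by rw [abs_div, abs_of_pos h0]; exact huth
        have t4 : |β / h * (lam ^ j - lam ^ (-j)) / lam ^ j| ≤ C := by
          rw [abs_div, abs_mul, abs_div, abs_of_pos h0, abs_of_pos hlK]
          rw [div_le_iff₀ hlK]
          calc |β| / h * |lam ^ j - lam ^ (-j)| ≤ C * lam ^ j := by gcongr
            _ = C * lam ^ j := rfl
        rw [abs_le] at t2 t3 t4 ⊢
        obtain ⟨hm1, hm2⟩ := abs_le.mp hm
        constructor
        · nlinarith [t2.1, t3.1, t4.2]
        · nlinarith [t2.2, t3.2, t4.1]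
      · subst hjeq
        rw [hK1eq, show K + 1 - K = (1:ℤ) from by ring, zpow_one]
        have t3 : |ut / h| ≤ C := by rw [abs_div, abs_of_pos h0]; exact huth
        calc |m - ut / h| ≤ |m| + |ut / h| := abs_sub _ _
          _ ≤ C * h + C := add_le_add hm t3
          _ ≤ D * h + D * lam := by nlinarith
          _ = D * (h + lam) := by ring
  have keyB : ∀ j ∈ Finset.Icc (K+2) (N-1), |u' j| ≤ D * h := by
    intro j hj
    simp only [Finset.mem_Icc] at hj
    rw [hB j hj.1 hj.2]
    calc |m| ≤ C * h := hm
      _ ≤ D * h := by nlinarith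
  -- bound on region B
  have hDh0 : 0 ≤ h * (D * h) ^ p := by positivity
  have hSB : ∑ j ∈ Finset.Icc (K+2) (N-1), h * |u' j| ^ p ≤ D ^ p * h := by
    have hterm : ∀ j ∈ Finset.Icc (K+2) (N-1), h * |u' j| ^ p ≤ h * (D * h) ^ p := by
      intro j hj
      exact mul_le_mul_of_nonneg_left
        (Real.rpow_le_rpow (abs_nonneg _) (keyB j hj) hp0.le) h0.le
    have hcard : ((Finset.Icc (K+2) (N-1)).card : ℝ) ≤ (N:ℝ) := by
      rw [Int.card_Icc]
      exact_mod_cast (show ((N - 1 + 1 - (K+2)).toNat : ℤ) ≤ N from by omega)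
    have hhp : h ^ p ≤ h := by
      calc h ^ p ≤ h ^ (1:ℝ) := Real.rpow_le_rpow_of_exponent_ge h0 h1 hp
        _ = h := Real.rpow_one h
    calc ∑ j ∈ Finset.Icc (K+2) (N-1), h * |u' j| ^ p
        ≤ (Finset.Icc (K+2) (N-1)).card • (h * (D * h) ^ p) :=
          Finset.sum_le_card_nsmul _ _ _ hterm
      _ = ((Finset.Icc (K+2) (N-1)).card : ℝ) * (h * (D * h) ^ p) := nsmul_eq_mul _ _
      _ ≤ (N:ℝ) * (h * (D * h) ^ p) := mul_le_mul_of_nonneg_right hcard hDh0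
      _ = (D * h) ^ p * ((N:ℝ) * h) := by ring
      _ = (D * h) ^ p := by rw [hNh, mul_one]
      _ = D ^ p * h ^ p := Real.mul_rpow hD0.le h0.le
      _ ≤ D ^ p * h := mul_le_mul_of_nonneg_left hhp (by positivity)
  -- bound on region A
  have hSA : ∑ j ∈ Finset.Icc (0:ℤ) (K+1), h * |u' j| ^ p ≤ h * (2 * D * E) ^ p := by
    have hlam1 : (0:ℝ) ≤ lam⁻¹ := by positivity
    set s : ℝ := lam⁻¹ ^ p with hs_def
    have hs0 : 0 ≤ s := Real.rpow_nonneg hlam1 p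
    have hs1 : s < 1 := Real.rpow_lt_one hlam1 (by rw [inv_lt_one_iff₀]; right; exact hlam) hp0
    -- termwise bound
    have step1 : ∑ j ∈ Finset.Icc (0:ℤ) (K+1), h * |u' j| ^ p
        ≤ ∑ j ∈ Finset.Icc (0:ℤ) (K+1),
            h * (2 ^ p * D ^ p * (h ^ p + (lam ^ (j-K)) ^ p)) := by
      apply Finset.sum_le_sum
      intro j hj
      have ht0 : (0:ℝ) ≤ lam ^ (j - K) := (zpow_pos hlam0 _).le
      have s1 : |u' j| ^ p ≤ (D * (h + lam ^ (j-K))) ^ p :=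
        Real.rpow_le_rpow (abs_nonneg _) (keyA j hj) hp0.le
      have s2 : (D * (h + lam ^ (j-K))) ^ p = D ^ p * (h + lam ^ (j-K)) ^ p :=
        Real.mul_rpow hD0.le (by positivity)
      have s3 : (h + lam ^ (j-K)) ^ p ≤ 2 ^ p * (h ^ p + (lam ^ (j-K)) ^ p) :=
        qc_split hp0.le h0.le ht0
      have s4 : |u' j| ^ p ≤ 2 ^ p * D ^ p * (h ^ p + (lam ^ (j-K)) ^ p) := by
        calc |u' j| ^ p ≤ D ^ p * (h + lam ^ (j-K)) ^ p := s2 ▸ s1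
          _ ≤ D ^ p * (2 ^ p * (h ^ p + (lam ^ (j-K)) ^ p)) :=
              mul_le_mul_of_nonneg_left s3 (by positivity)
          _ = 2 ^ p * D ^ p * (h ^ p + (lam ^ (j-K)) ^ p) := by ring
      exact mul_le_mul_of_nonneg_left s4 h0.le
    have step2 : ∑ j ∈ Finset.Icc (0:ℤ) (K+1),
            h * (2 ^ p * D ^ p * (h ^ p + (lam ^ (j-K)) ^ p))
        = h * 2 ^ p * D ^ p
            * ∑ j ∈ Finset.Icc (0:ℤ) (K+1), (h ^ p + (lam ^ (j-K)) ^ p) := by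
      rw [Finset.mul_sum]
      exact Finset.sum_congr rfl fun j _ => by ring
    -- the h^p part
    have hcard : ((Finset.Icc (0:ℤ) (K+1)).card : ℝ) ≤ (N:ℝ) := by
      rw [Int.card_Icc]
      exact_mod_cast (show ((K + 1 + 1 - 0).toNat : ℤ) ≤ N from by omega)
    have hhp : h ^ p ≤ h := by
      calc h ^ p ≤ h ^ (1:ℝ) := Real.rpow_le_rpow_of_exponent_ge h0 h1 hp
        _ = h := Real.rpow_one h
    have partA : ∑ _j ∈ Finset.Icc (0:ℤ) (K+1), h ^ p ≤ 1 := by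
      rw [Finset.sum_const, nsmul_eq_mul]
      calc ((Finset.Icc (0:ℤ) (K+1)).card : ℝ) * h ^ p ≤ (N:ℝ) * h := by
            apply mul_le_mul hcard hhp (Real.rpow_nonneg h0.le p) hNR.le
        _ = 1 := hNh
    -- the geometric part
    have hterm_eq : ∀ j ∈ Finset.Icc (0:ℤ) K, (lam ^ (j-K)) ^ p = s ^ (K - j).toNat := by
      intro j hj
      rw [Finset.mem_Icc] at hj
      have e1 : lam ^ (j - K) = lam⁻¹ ^ (K - j).toNat := by
        rw [inv_pow, ← zpow_natCast lam (K - j).toNat,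
          show ((K - j).toNat : ℤ) = K - j from by omega, ← zpow_neg,
          show -(K - j) = j - K from by ring]
      rw [e1, qc_pow_rpow hlam1]
    have hreindex : ∑ j ∈ Finset.Icc (0:ℤ) K, s ^ (K - j).toNat
        = ∑ n ∈ Finset.range (K+1).toNat, s ^ n := by
      refine Finset.sum_nbij' (fun j => (K - j).toNat) (fun n => K - (n:ℤ)) ?_ ?_ ?_ ?_ ?_
      · intro a ha; simp only [Finset.mem_Icc, Finset.mem_range] at *; omega
      · intro a ha; simp only [Finset.mem_Icc, Finset.mem_range] at *; omega
      · intro a ha; simp only [Finset.mem_Icc] at ha; omega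
      · intro a ha; simp only [Finset.mem_range] at ha; omega
      · intro a _; rfl
    have hgeom : ∑ j ∈ Finset.Icc (0:ℤ) K, s ^ (K - j).toNat ≤ (1 - s)⁻¹ := by
      rw [hreindex]; exact qc_geom hs0 hs1 _
    -- (1-s)⁻¹ ≤ 1 + ((lam-1)⁻¹)^p
    have hlamp : lam ≤ lam ^ p := by
      calc lam = lam ^ (1:ℝ) := (Real.rpow_one lam).symm
        _ ≤ lam ^ p := Real.rpow_le_rpow_of_exponent_le hlam.le hp
    have hA1 : 1 < lam ^ p := lt_of_lt_of_le hlam hlamp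
    have hsl : s = (lam ^ p)⁻¹ := Real.inv_rpow hlam0.le p
    have hgp : (lam - 1) ^ p ≤ lam ^ p - 1 := by
      have hq := qc_superadd hp (show (0:ℝ) ≤ lam - 1 from by linarith) zero_le_one
      rw [Real.one_rpow, show lam - 1 + 1 = lam from by ring] at hq
      linarith
    have hgp0 : (0:ℝ) < (lam - 1) ^ p := Real.rpow_pos_of_pos (by linarith) p
    have hinv_le : (1 - s)⁻¹ ≤ 1 + ((lam - 1)⁻¹) ^ p := by
      have hB : ((lam - 1)⁻¹) ^ p = ((lam - 1) ^ p)⁻¹ :=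
        Real.inv_rpow (by linarith) p
      have h1s : 1 - s = (lam ^ p - 1) / lam ^ p := by
        rw [hsl]; field_simp
      rw [h1s, inv_div, div_le_iff₀ (by linarith), hB]
      have hBmul : ((lam - 1) ^ p)⁻¹ * (lam - 1) ^ p = 1 := inv_mul_cancel₀ hgp0.ne'
      have h1le : (1:ℝ) ≤ ((lam - 1) ^ p)⁻¹ * (lam ^ p - 1) := by
        calc (1:ℝ) = ((lam - 1) ^ p)⁻¹ * (lam - 1) ^ p := hBmul.symm
          _ ≤ ((lam - 1) ^ p)⁻¹ * (lam ^ p - 1) :=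
            mul_le_mul_of_nonneg_left hgp (inv_nonneg.2 hgp0.le)
      have expand : (1 + ((lam - 1) ^ p)⁻¹) * (lam ^ p - 1)
          = lam ^ p - 1 + ((lam - 1) ^ p)⁻¹ * (lam ^ p - 1) := by ring
      linarith
    -- sum over Icc 0 (K+1) of the lam part
    have hins : Finset.Icc (0:ℤ) (K+1) = insert (K+1) (Finset.Icc 0 K) := by
      ext x; simp only [Finset.mem_Icc, Finset.mem_insert]; omega
    have partB : ∑ j ∈ Finset.Icc (0:ℤ) (K+1), (lam ^ (j-K)) ^ p
        ≤ lam ^ p + (1 + ((lam - 1)⁻¹) ^ p) := by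
      rw [hins, Finset.sum_insert (by simp only [Finset.mem_Icc]; omega)]
      have htop : (lam ^ (K + 1 - K)) ^ p = lam ^ p := by
        rw [show K + 1 - K = (1:ℤ) from by ring, zpow_one]
      rw [htop, Finset.sum_congr rfl hterm_eq]
      have : (1:ℝ) - s ≤ 1 := by linarith
      gcongr
      exact hgeom.trans hinv_le
    -- E^p bound
    have hEp : 2 + lam ^ p + ((lam - 1)⁻¹) ^ p ≤ E ^ p := by
      have e1 : (1:ℝ) ^ p + 1 ^ p ≤ (2:ℝ) ^ p := by
        have := qc_superadd hp (zero_le_one (α := ℝ)) zero_le_one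
        norm_num at this ⊢; linarith [this]
      have e2 : (2:ℝ) ^ p + lam ^ p ≤ (2 + lam) ^ p :=
        qc_superadd hp (by norm_num) hlam0.le
      have e3 : (2 + lam) ^ p + ((lam - 1)⁻¹) ^ p ≤ (2 + lam + (lam - 1)⁻¹) ^ p :=
        qc_superadd hp (by linarith) hinv0
      rw [Real.one_rpow] at e1
      rw [hE_def]
      linarith
    -- put it together
    have hsum_split : ∑ j ∈ Finset.Icc (0:ℤ) (K+1), (h ^ p + (lam ^ (j-K)) ^ p)
        = (∑ _j ∈ Finset.Icc (0:ℤ) (K+1), h ^ p)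
          + ∑ j ∈ Finset.Icc (0:ℤ) (K+1), (lam ^ (j-K)) ^ p :=
      Finset.sum_add_distrib
    have htot : ∑ j ∈ Finset.Icc (0:ℤ) (K+1), (h ^ p + (lam ^ (j-K)) ^ p) ≤ E ^ p := by
      rw [hsum_split]
      calc (∑ _j ∈ Finset.Icc (0:ℤ) (K+1), h ^ p)
          + ∑ j ∈ Finset.Icc (0:ℤ) (K+1), (lam ^ (j-K)) ^ p
          ≤ 1 + (lam ^ p + (1 + ((lam - 1)⁻¹) ^ p)) := add_le_add partA partB
        _ = 2 + lam ^ p + ((lam - 1)⁻¹) ^ p := by ring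
        _ ≤ E ^ p := hEp
    have hfac2 : (2 * D * E) ^ p = 2 ^ p * D ^ p * E ^ p := by
      rw [Real.mul_rpow (by positivity) hE0.le, Real.mul_rpow (by norm_num) hD0.le]
    calc ∑ j ∈ Finset.Icc (0:ℤ) (K+1), h * |u' j| ^ p
        ≤ h * 2 ^ p * D ^ p
            * ∑ j ∈ Finset.Icc (0:ℤ) (K+1), (h ^ p + (lam ^ (j-K)) ^ p) := by
          rw [← step2]; exact step1
      _ ≤ h * 2 ^ p * D ^ p * E ^ p := mul_le_mul_of_nonneg_left htot (by positivity)
      _ = h * (2 * D * E) ^ p := by rw [hfac2]; ring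
  -- assemble
  have hC'0 : (0:ℝ) < 2 * (2 * D * E + D) := by nlinarith
  have hfinal : ∑ j ∈ Finset.Icc (-N) (N-1), h * |u' j| ^ p
      ≤ (2 * (2 * D * E + D)) ^ p * h := by
    rw [hsum2, hsplit2, Finset.sum_union hdisj2]
    have h2p : (2:ℝ) ≤ 2 ^ p := by
      calc (2:ℝ) = 2 ^ (1:ℝ) := (Real.rpow_one 2).symm
        _ ≤ 2 ^ p := Real.rpow_le_rpow_of_exponent_le one_le_two hp
    have hsplit3 : (2 * D * E) ^ p + D ^ p ≤ (2 * D * E + D) ^ p :=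
      qc_superadd hp (by positivity) (by positivity)
    have hfac : (2 * (2 * D * E + D)) ^ p = 2 ^ p * (2 * D * E + D) ^ p :=
      Real.mul_rpow (by norm_num) (by positivity)
    have hbound : ∑ j ∈ Finset.Icc (0:ℤ) (K+1), h * |u' j| ^ p
        + ∑ j ∈ Finset.Icc (K+2) (N-1), h * |u' j| ^ p
        ≤ ((2 * D * E) ^ p + D ^ p) * h := by
      calc ∑ j ∈ Finset.Icc (0:ℤ) (K+1), h * |u' j| ^ p
          + ∑ j ∈ Finset.Icc (K+2) (N-1), h * |u' j| ^ p
          ≤ h * (2 * D * E) ^ p + D ^ p * h := add_le_add hSA hSB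
        _ = ((2 * D * E) ^ p + D ^ p) * h := by ring
    have hle : ((2 * D * E) ^ p + D ^ p) * h ≤ (2 * D * E + D) ^ p * h :=
      mul_le_mul_of_nonneg_right hsplit3 h0.le
    have h2le : 2 * ((2 * D * E + D) ^ p * h) ≤ 2 ^ p * (2 * D * E + D) ^ p * h := by
      have hx : (0:ℝ) ≤ (2 * D * E + D) ^ p * h := by positivity
      calc 2 * ((2 * D * E + D) ^ p * h) ≤ 2 ^ p * ((2 * D * E + D) ^ p * h) :=
            mul_le_mul_of_nonneg_right h2p hx
        _ = 2 ^ p * (2 * D * E + D) ^ p * h := by ring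
    calc 2 * (∑ j ∈ Finset.Icc (0:ℤ) (K+1), h * |u' j| ^ p
        + ∑ j ∈ Finset.Icc (K+2) (N-1), h * |u' j| ^ p)
        ≤ 2 * (((2 * D * E) ^ p + D ^ p) * h) := by linarith
      _ ≤ 2 * ((2 * D * E + D) ^ p * h) := by linarith
      _ ≤ 2 ^ p * (2 * D * E + D) ^ p * h := h2le
      _ = (2 * (2 * D * E + D)) ^ p * h := by rw [hfac]
  -- conclude
  have hS0 : 0 ≤ ∑ j ∈ Finset.Icc (-N) (N-1), h * |u' j| ^ p :=
    Finset.sum_nonneg fun j _ => hf0 j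
  have hstep := Real.rpow_le_rpow hS0 hfinal (by positivity : (0:ℝ) ≤ 1/p)
  refine hstep.trans (le_of_eq ?_)
  rw [Real.mul_rpow (by positivity) h0.le, ← Real.rpow_mul hC'0.le,
    mul_one_div, div_self hp0.ne', Real.rpow_one]
end
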